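/- Let f(t) = t² − 1 and φ(t) = (4·f(t)·f″(t) − 5·f′(t)²)/(16·f(t)³) for t > 1, and define functions F_k on (1, ∞) by F_1 = φ/2 and F_{k+1}(t) = −F_k′(t)/(2·√(t² − 1)) − (1/2)·∑_{j=1}^{k−1} F_j(t)·F_{k−j}(t). Then for every k ≥ 1 and every t > 1, F_k(t) = Q_k(t)/(t² − 1)^{3(k+1)/2}, where Q_k ∈ ℚ[X] is defined by Q_1 = −(3X² + 2)/8 and Q_{k+1} = (3/2)(k+1)·X·Q_k − (1/2)(X² − 1)·Q_k′ − (1/2)·∑_{j=1}^{k−1} Q_j·Q_{k−j}. -/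

import Mathlib

open Polynomial

/-- The polynomials `Q_k ∈ ℚ[X]`: `Q_1 = −(3X²+2)/8` and
`Q_{k+1} = (3/2)(k+1)·X·Q_k − (1/2)(X²−1)·Q_k′ − (1/2)∑_{j=1}^{k−1} Q_j·Q_{k−j}`. -/
noncomputable def QHer : ℕ → Polynomial ℚ
  | 0 => 0
  | 1 => C (-(1 : ℚ) / 8) * (3 * X ^ 2 + 2)
  | (k + 2) =>
      C (((3 : ℚ) / 2) * ((k : ℚ) + 2)) * X * QHer (k + 1)
        - C ((1 : ℚ) / 2) * (X ^ 2 - 1) * derivative (QHer (k + 1))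
        - C ((1 : ℚ) / 2) *
            ∑ j ∈ (Finset.Ico 1 (k + 1)).attach, QHer j.1 * QHer (k + 1 - j.1)
  decreasing_by
    all_goals try (have hj := Finset.mem_Ico.mp j.2)
    all_goals omega

/-- `f(t) = t² − 1`. -/
noncomputable def fHer : ℝ → ℝ := fun t => t ^ 2 - 1

/-- `φ(t) = (4f(t)f″(t) − 5f′(t)²)/(16f(t)³)`. -/
noncomputable def phiHer (t : ℝ) : ℝ :=
  (4 * fHer t * deriv (deriv fHer) t - 5 * (deriv fHer t) ^ 2) / (16 * (fHer t) ^ 3)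

/-- The functions `F_k`: `F_1 = φ/2` and
`F_{k+1}(t) = −F_k′(t)/(2√(t²−1)) − (1/2)∑_{j=1}^{k−1} F_j(t)F_{k−j}(t)`. -/
noncomputable def FHer : ℕ → ℝ → ℝ
  | 0 => fun _ => 0
  | 1 => fun t => phiHer t / 2
  | (k + 2) => fun t =>
      -(deriv (FHer (k + 1)) t) / (2 * Real.sqrt (t ^ 2 - 1))
        - (1 / 2) * ∑ j ∈ (Finset.Ico 1 (k + 1)).attach, FHer j.1 t * FHer (k + 1 - j.1) t
  decreasing_by
    all_goals try (have hj := Finset.mem_Ico.mp j.2)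
    all_goals omega

lemma rpow_half_nat {u : ℝ} (hu : 0 < u) (n : ℕ) :
    u ^ ((n : ℝ) / 2) = Real.sqrt u ^ n := by
  rw [Real.sqrt_eq_rpow, ← Real.rpow_natCast (u ^ ((1:ℝ)/2)) n, ← Real.rpow_mul hu.le]
  norm_num
  ring_nf

lemma deriv_fHer : deriv fHer = fun t => 2 * t := by
  ext x
  have : HasDerivAt fHer (2 * x) x := by
    show HasDerivAt (fun t : ℝ => t ^ 2 - 1) (2 * x) x
    exact ((hasDerivAt_pow 2 x).sub_const 1).congr_deriv (by norm_num)
  simpa using this.deriv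

/-- For every `k ≥ 1` and `t > 1`, `F_k(t) = Q_k(t)/(t²−1)^{3(k+1)/2}`. -/
theorem stmt12 : ∀ k : ℕ, 1 ≤ k → ∀ t : ℝ, 1 < t →
    FHer k t = Polynomial.aeval t (QHer k) / (t ^ 2 - 1) ^ ((3 * ((k : ℝ) + 1)) / 2) := by
  intro k
  induction k using Nat.strong_induction_on with
  | _ k IH =>
    match k with
    | 0 => omega
    | 1 =>
      intro _ t ht
      have hu : (0:ℝ) < t ^ 2 - 1 := by nlinarith
      have hd2 : deriv (fun t : ℝ => 2 * t) t = 2 := by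
        simpa using ((hasDerivAt_id t).const_mul (2:ℝ)).deriv
      rw [FHer]
      beta_reduce
      simp only [phiHer, deriv_fHer, hd2]
      rw [show ((3:ℝ) * (((1:ℕ):ℝ) + 1)) / 2 = ((3:ℕ):ℝ) by norm_num, Real.rpow_natCast]
      rw [QHer]
      simp only [map_mul, map_add, map_pow, aeval_X, aeval_C, map_ofNat, eq_ratCast]
      unfold fHer
      push_cast
      field_simp
      ring
    | (K + 2) =>
      intro _ t ht
      have hu : (0:ℝ) < t ^ 2 - 1 := by nlinarith
      set s := Real.sqrt (t ^ 2 - 1) with hs_def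
      have hs : 0 < s := Real.sqrt_pos.2 hu
      have hs2 : s ^ 2 = t ^ 2 - 1 := Real.sq_sqrt hu.le
      have key : ∀ n : ℕ, (t ^ 2 - 1) ^ ((n : ℝ) / 2) = s ^ n := fun n => rpow_half_nat hu n
      -- the derivative of F_{K+1}
      set P : ℝ := aeval t (QHer (K + 1)) with hP_def
      set P' : ℝ := aeval t (derivative (QHer (K + 1))) with hP'_def
      set e₁ : ℝ := (3 * ((((K:ℝ) + 1)) + 1)) / 2 with he₁_def
      have hgderiv : HasDerivAt
          (fun x : ℝ => aeval x (QHer (K + 1)) / (x ^ 2 - 1) ^ e₁)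
          ((P' * (t ^ 2 - 1) ^ e₁ - P * (2 * t * e₁ * (t ^ 2 - 1) ^ (e₁ - 1)))
            / ((t ^ 2 - 1) ^ e₁) ^ 2) t := by
        have hP : HasDerivAt (fun x : ℝ => aeval x (QHer (K + 1))) P' t :=
          (QHer (K + 1)).hasDerivAt_aeval t
        have hin : HasDerivAt (fun x : ℝ => x ^ 2 - 1) (2 * t) t := by
          simpa using (hasDerivAt_pow 2 t).sub_const 1
        have hpow := hin.rpow_const (p := e₁) (Or.inl hu.ne')
        exact hP.div hpow (Real.rpow_pos_of_pos hu e₁).ne'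
      have hev : FHer (K + 1) =ᶠ[nhds t]
          fun x : ℝ => aeval x (QHer (K + 1)) / (x ^ 2 - 1) ^ e₁ := by
        filter_upwards [isOpen_Ioi.mem_nhds (Set.mem_Ioi.mpr ht)] with x hx
        have h := IH (K + 1) (by omega) (by omega) x hx
        rw [show ((3:ℝ) * (((K + 1 : ℕ):ℝ) + 1)) / 2 = e₁ by rw [he₁_def]; push_cast; ring] at h
        exact h
      have hderiv : deriv (FHer (K + 1)) t
          = (P' * (t ^ 2 - 1) ^ e₁ - P * (2 * t * e₁ * (t ^ 2 - 1) ^ (e₁ - 1)))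
            / ((t ^ 2 - 1) ^ e₁) ^ 2 := by
        rw [hev.deriv_eq, hgderiv.deriv]
      -- rewrite the sum
      have hsum : ∑ j ∈ (Finset.Ico 1 (K + 1)).attach, FHer j.1 t * FHer (K + 1 - j.1) t
          = (∑ j ∈ (Finset.Ico 1 (K + 1)).attach,
              aeval t (QHer j.1 * QHer (K + 1 - j.1))) / s ^ (3 * K + 9) := by
        rw [Finset.sum_div]
        refine Finset.sum_congr rfl fun j _ => ?_
        have hj := Finset.mem_Ico.mp j.2
        have h1 := IH j.1 (by omega) hj.1 t ht
        have h2 := IH (K + 1 - j.1) (by omega) (by omega) t ht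
        rw [show ((3:ℝ) * ((j.1:ℝ) + 1)) / 2 = ((3 * j.1 + 3 : ℕ) : ℝ) / 2 by push_cast; ring,
          key] at h1
        rw [show ((3:ℝ) * (((K + 1 - j.1 : ℕ):ℝ) + 1)) / 2
            = ((3 * (K + 1 - j.1) + 3 : ℕ) : ℝ) / 2 by push_cast; ring, key] at h2
        rw [h1, h2, map_mul, div_mul_div_comm, ← pow_add]
        congr 2
        omega
      rw [FHer]
      beta_reduce
      rw [hderiv, hsum, QHer]
      simp only [map_sub, map_mul, map_sum, aeval_C, aeval_X, map_pow, map_add, map_one,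
        eq_ratCast]
      rw [show ((3:ℝ) * (((K + 2 : ℕ):ℝ) + 1)) / 2 = ((3 * K + 9 : ℕ) : ℝ) / 2 by
        push_cast; ring, key]
      rw [show e₁ = ((3 * K + 6 : ℕ) : ℝ) / 2 by rw [he₁_def]; push_cast; ring] at hderiv ⊢
      rw [show ((3 * K + 6 : ℕ) : ℝ) / 2 - 1 = ((3 * K + 4 : ℕ) : ℝ) / 2 by push_cast; ring,
        key, key]
      rw [← hs2]
      push_cast
      rw [show s ^ (3 * K + 9) = s ^ (3 * K) * s ^ 9 by ring,
        show s ^ (3 * K + 6) = s ^ (3 * K) * s ^ 6 by ring,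
        show s ^ (3 * K + 4) = s ^ (3 * K) * s ^ 4 by ring]
      have hsk : s ^ (3 * K) ≠ 0 := pow_ne_zero _ hs.ne'
      simp only [Real.sqrt_sq hs.le, hP_def, hP'_def]
      field_simp
      ring
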